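/- arXiv:2509.08246 — 5 statements merged into one kernel-verified Lean document; each statement's English description precedes it below -/
import Mathlib

section
/- Let T be a triangulated category, M a rigid object (Hom(M, ΣM) = 0), and suppose X and Y admit triangles M⁻¹ →a M⁰ →b X →c ΣM⁻¹ and M'⁻¹ →a' M'⁰ →b' Y →c' ΣM'⁻¹ with all M-terms in add(M). Then the map sending a morphism f : M⁻¹ → M'⁰ to Σb' ∘ Σf ∘ c induces a bijection from the set of homotopy classes of such f (i.e. Hom in the homotopy category between the 2-term complexes (M⁻¹→M⁰) and the shift of (M'⁻¹→M'⁰)) to the set [ΣM](X, ΣY) of morphisms X → ΣY that factor through an object of add(ΣM). -/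
/-!
Rigidity of `M` makes every morphism from an object of `add M` to the shift of another one
vanish. Applied to `M'⁻¹`, a morphism from `add M` to `Y` lifts along `b'`; applied to `M⁰`, a
morphism from `X` to `Σ(add M)` factors through `c`. Together these lift any `X → ΣZ → ΣY` with
`Z ∈ add M` to some `Σb' ∘ Σf ∘ c`. For the kernel: if `c ≫ Σ(f ≫ b') = 0`, then `f ≫ b'`
factors as `a ≫ k`; `k` lifts along `b'` to `h⁰`, and `f - a ≫ h⁰`, killed by `b'`, factors
through `a'`.
-/

open CategoryTheory CategoryTheory.Limits CategoryTheory.Pretriangulated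

universe v u

variable {C : Type u} [Category.{v} C] [Preadditive C] [HasZeroObject C]
  [HasShift C ℤ] [∀ n : ℤ, (shiftFunctor C n).Additive] [Pretriangulated C]
  [HasFiniteBiproducts C]

/-- `X` belongs to `add M`: it is a direct summand of a finite direct sum of copies of `M`. -/
def InAdd (M X : C) : Prop :=
  ∃ (n : ℕ) (i : X ⟶ ⨁ (fun _ : Fin n => M)) (p : (⨁ (fun _ : Fin n => M)) ⟶ X),
    i ≫ p = 𝟙 X

/-- A morphism `w : X ⟶ ΣY` factors through an object of `add (ΣM)`. -/
def FactorsThroughAddShift (M : C) {X Y : C} (w : X ⟶ Y⟦(1 : ℤ)⟧) : Prop :=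
  ∃ (Z : C), InAdd M Z ∧ ∃ (f : X ⟶ Z⟦(1 : ℤ)⟧) (g : Z⟦(1 : ℤ)⟧ ⟶ Y⟦(1 : ℤ)⟧),
    w = f ≫ g

namespace InAdd

omit [HasZeroObject C] [HasShift C ℤ] [∀ n : ℤ, (shiftFunctor C n).Additive]
  [Pretriangulated C]

lemma map {D : Type*} [Category D] [Preadditive D] [HasFiniteBiproducts D]
    (F : C ⥤ D) [F.Additive] {M X : C} (h : InAdd M X) : InAdd (F.obj M) (F.obj X) := by
  obtain ⟨n, i, p, hip⟩ := h
  refine ⟨n, F.map i ≫ (F.mapBiproduct _).hom, (F.mapBiproduct _).inv ≫ F.map p, ?_⟩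
  rw [Category.assoc, Iso.hom_inv_id_assoc, ← F.map_comp, hip, F.map_id]

lemma eq_zero_of_forall_from {M X W : C} (hX : InAdd M X) (hM : ∀ g : M ⟶ W, g = 0)
    (g : X ⟶ W) : g = 0 := by
  obtain ⟨n, i, p, hip⟩ := hX
  have hp : p ≫ g = 0 := biproduct.hom_ext' _ _ fun _ => (hM _).trans comp_zero.symm
  rw [← Category.id_comp g, ← hip, Category.assoc, hp, comp_zero]

lemma eq_zero_of_forall_to {M X W : C} (hX : InAdd M X) (hM : ∀ g : W ⟶ M, g = 0)
    (g : W ⟶ X) : g = 0 := by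
  obtain ⟨n, i, p, hip⟩ := hX
  have hi : g ≫ i = 0 := biproduct.hom_ext _ _ fun _ => (hM _).trans zero_comp.symm
  rw [← Category.comp_id g, ← hip, ← Category.assoc, hi, zero_comp]

end InAdd

omit [HasZeroObject C] [Pretriangulated C] in
lemma shift_hom_eq_zero_of_inAdd {M Z₁ Z₂ : C} (hrigid : ∀ f : M ⟶ M⟦(1 : ℤ)⟧, f = 0)
    (h₁ : InAdd M Z₁) (h₂ : InAdd M Z₂) (φ : Z₁ ⟶ Z₂⟦(1 : ℤ)⟧) : φ = 0 :=
  h₁.eq_zero_of_forall_from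
    (fun _ => (h₂.map (shiftFunctor C (1 : ℤ))).eq_zero_of_forall_to hrigid _) φ

omit [HasFiniteBiproducts C] in
lemma Triangle.yoneda_exact₁ {T : Triangle C} (hT : T ∈ distTriang C) {W : C} (f : T.obj₁ ⟶ W)
    (hf : T.mor₃ ≫ f⟦(1 : ℤ)⟧' = 0) : ∃ g : T.obj₂ ⟶ W, f = T.mor₁ ≫ g := by
  obtain ⟨g, hg⟩ : ∃ g : T.obj₂⟦(1 : ℤ)⟧ ⟶ W⟦(1 : ℤ)⟧, f⟦(1 : ℤ)⟧' = (-T.mor₁⟦(1 : ℤ)⟧') ≫ g :=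
    Triangle.yoneda_exact₃ _ (rot_of_distTriang _ hT) _ hf
  obtain ⟨g, rfl⟩ := (shiftFunctor C (1 : ℤ)).map_surjective g
  exact ⟨-g, (shiftFunctor C (1 : ℤ)).map_injective (by simp [hg])⟩

section Rigid

variable {M : C} (hrigid : ∀ f : M ⟶ M⟦(1 : ℤ)⟧, f = 0) {T T' : Triangle C}
  (hT : T ∈ distTriang C) (hT' : T' ∈ distTriang C)
include hrigid

include hT' in
lemma exists_eq_comp_mor₂_of_inAdd (hT'₁ : InAdd M T'.obj₁) {Z : C} (hZ : InAdd M Z)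
    (g : Z ⟶ T'.obj₃) : ∃ u : Z ⟶ T'.obj₂, g = u ≫ T'.mor₂ :=
  Triangle.coyoneda_exact₃ _ hT' g (shift_hom_eq_zero_of_inAdd hrigid hZ hT'₁ _)

include hT in
lemma exists_eq_mor₃_comp_shift_of_inAdd (hT₂ : InAdd M T.obj₂) {Z : C} (hZ : InAdd M Z)
    (φ : T.obj₃ ⟶ Z⟦(1 : ℤ)⟧) : ∃ v : T.obj₁ ⟶ Z, φ = T.mor₃ ≫ v⟦(1 : ℤ)⟧' := by
  obtain ⟨v, hv⟩ := Triangle.yoneda_exact₃ _ hT φ (shift_hom_eq_zero_of_inAdd hrigid hT₂ hZ _)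
  obtain ⟨v, rfl⟩ := (shiftFunctor C (1 : ℤ)).map_surjective v
  exact ⟨v, hv⟩

include hT hT' in
lemma exists_eq_of_factorsThroughAddShift (hT₂ : InAdd M T.obj₂) (hT'₁ : InAdd M T'.obj₁)
    (w : T.obj₃ ⟶ T'.obj₃⟦(1 : ℤ)⟧) (hw : FactorsThroughAddShift M w) :
    ∃ f : T.obj₁ ⟶ T'.obj₂, w = T.mor₃ ≫ f⟦(1 : ℤ)⟧' ≫ T'.mor₂⟦(1 : ℤ)⟧' := by
  obtain ⟨Z, hZ, φ, ψ, rfl⟩ := hw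
  obtain ⟨ψ, rfl⟩ := (shiftFunctor C (1 : ℤ)).map_surjective ψ
  obtain ⟨u, rfl⟩ := exists_eq_comp_mor₂_of_inAdd hrigid hT' hT'₁ hZ ψ
  obtain ⟨v, rfl⟩ := exists_eq_mor₃_comp_shift_of_inAdd hrigid hT hT₂ hZ φ
  exact ⟨v ≫ u, by simp⟩

include hT hT' in
lemma mor₃_comp_shift_comp_eq_zero_iff (hT₂ : InAdd M T.obj₂) (hT'₁ : InAdd M T'.obj₁)
    (g : T.obj₁ ⟶ T'.obj₂) :
    T.mor₃ ≫ g⟦(1 : ℤ)⟧' ≫ T'.mor₂⟦(1 : ℤ)⟧' = 0 ↔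
      ∃ (h₀ : T.obj₂ ⟶ T'.obj₂) (h₁ : T.obj₁ ⟶ T'.obj₁), g = T.mor₁ ≫ h₀ - h₁ ≫ T'.mor₁ := by
  constructor
  · intro hg
    obtain ⟨k, hk⟩ := Triangle.yoneda_exact₁ hT (g ≫ T'.mor₂) (by simpa using hg)
    obtain ⟨h₀, rfl⟩ := exists_eq_comp_mor₂_of_inAdd hrigid hT' hT'₁ hT₂ k
    obtain ⟨h₁, hh⟩ := Triangle.coyoneda_exact₂ _ hT' (g - T.mor₁ ≫ h₀)
      (by simp [Preadditive.sub_comp, hk])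
    exact ⟨h₀, -h₁, by simp [← hh]⟩
  · rintro ⟨h₀, h₁, rfl⟩
    have h₁₂ : T'.mor₁⟦(1 : ℤ)⟧' ≫ T'.mor₂⟦(1 : ℤ)⟧' = 0 := by
      rw [← Functor.map_comp, comp_distTriang_mor_zero₁₂ _ hT', Functor.map_zero]
    simp [comp_distTriang_mor_zero₃₁_assoc _ hT, h₁₂]

include hT hT' in
lemma mor₃_comp_shift_comp_eq_iff_homotopic (hT₂ : InAdd M T.obj₂) (hT'₁ : InAdd M T'.obj₁)
    (f f' : T.obj₁ ⟶ T'.obj₂) :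
    T.mor₃ ≫ f⟦(1 : ℤ)⟧' ≫ T'.mor₂⟦(1 : ℤ)⟧' = T.mor₃ ≫ f'⟦(1 : ℤ)⟧' ≫ T'.mor₂⟦(1 : ℤ)⟧' ↔
      ∃ (h₀ : T.obj₂ ⟶ T'.obj₂) (h₁ : T.obj₁ ⟶ T'.obj₁), f - f' = T.mor₁ ≫ h₀ - h₁ ≫ T'.mor₁ := by
  rw [← mor₃_comp_shift_comp_eq_zero_iff hrigid hT hT' hT₂ hT'₁, Functor.map_sub,
    Preadditive.sub_comp, Preadditive.comp_sub, sub_eq_zero]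

end Rigid

theorem stmt0_general (M X Y Mm1 M0 Mm1' M0' : C)
    (hrigid : ∀ f : M ⟶ M⟦(1 : ℤ)⟧, f = 0)
    (h1 : InAdd M Mm1) (h0 : InAdd M M0) (h1' : InAdd M Mm1')
    (a : Mm1 ⟶ M0) (b : M0 ⟶ X) (c : X ⟶ Mm1⟦(1 : ℤ)⟧)
    (a' : Mm1' ⟶ M0') (b' : M0' ⟶ Y) (c' : Y ⟶ Mm1'⟦(1 : ℤ)⟧)
    (hT : Triangle.mk a b c ∈ distTriang C)
    (hT' : Triangle.mk a' b' c' ∈ distTriang C) :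
    (∀ f : Mm1 ⟶ M0',
        FactorsThroughAddShift M (c ≫ f⟦(1 : ℤ)⟧' ≫ b'⟦(1 : ℤ)⟧')) ∧
    (∀ w : X ⟶ Y⟦(1 : ℤ)⟧, FactorsThroughAddShift M w →
        ∃ f : Mm1 ⟶ M0', w = c ≫ f⟦(1 : ℤ)⟧' ≫ b'⟦(1 : ℤ)⟧') ∧
    (∀ f f' : Mm1 ⟶ M0',
        (c ≫ f⟦(1 : ℤ)⟧' ≫ b'⟦(1 : ℤ)⟧' = c ≫ f'⟦(1 : ℤ)⟧' ≫ b'⟦(1 : ℤ)⟧') ↔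
          ∃ (h0 : M0 ⟶ M0') (hm1 : Mm1 ⟶ Mm1'), f - f' = a ≫ h0 - hm1 ≫ a') := by
  refine ⟨fun f => ⟨Mm1, h1, c, f⟦(1 : ℤ)⟧' ≫ b'⟦(1 : ℤ)⟧', rfl⟩,
    exists_eq_of_factorsThroughAddShift hrigid hT hT' h0 h1',
    mor₃_comp_shift_comp_eq_iff_homotopic hrigid hT hT' h0 h1'⟩

/-- For a rigid object `M` and presentation triangles of `X` and `Y`,
the assignment `f ↦ Σb' ∘ Σf ∘ c` induces a bijection from homotopy classes of
morphisms `M⁻¹ ⟶ M'⁰` (between the two-term complexes `(M⁻¹ → M⁰)` and the shift of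
`(M'⁻¹ → M'⁰)`) onto the set `[ΣM](X, ΣY)` of morphisms factoring through `add (ΣM)`. -/
theorem stmt0 (M X Y Mm1 M0 Mm1' M0' : C)
    (hrigid : ∀ f : M ⟶ M⟦(1 : ℤ)⟧, f = 0)
    (h1 : InAdd M Mm1) (h0 : InAdd M M0) (h1' : InAdd M Mm1') (h0' : InAdd M M0')
    (a : Mm1 ⟶ M0) (b : M0 ⟶ X) (c : X ⟶ Mm1⟦(1 : ℤ)⟧)
    (a' : Mm1' ⟶ M0') (b' : M0' ⟶ Y) (c' : Y ⟶ Mm1'⟦(1 : ℤ)⟧)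
    (hT : Triangle.mk a b c ∈ distTriang C)
    (hT' : Triangle.mk a' b' c' ∈ distTriang C) :
    (∀ f : Mm1 ⟶ M0',
        FactorsThroughAddShift M (c ≫ f⟦(1 : ℤ)⟧' ≫ b'⟦(1 : ℤ)⟧')) ∧
    (∀ w : X ⟶ Y⟦(1 : ℤ)⟧, FactorsThroughAddShift M w →
        ∃ f : Mm1 ⟶ M0', w = c ≫ f⟦(1 : ℤ)⟧' ≫ b'⟦(1 : ℤ)⟧') ∧
    (∀ f f' : Mm1 ⟶ M0',
        (c ≫ f⟦(1 : ℤ)⟧' ≫ b'⟦(1 : ℤ)⟧' = c ≫ f'⟦(1 : ℤ)⟧' ≫ b'⟦(1 : ℤ)⟧') ↔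
          ∃ (h0 : M0 ⟶ M0') (hm1 : Mm1 ⟶ Mm1'), f - f' = a ≫ h0 - hm1 ≫ a') :=
  stmt0_general M X Y Mm1 M0 Mm1' M0' hrigid h1 h0 h1' a b c a' b' c' hT hT'
end

section
/- Let T be a triangulated category and M a 2-rigid object, i.e. Hom_T(M, ΣM) = 0 = Hom_T(M, Σ²M). Then for any objects X, Y ∈ pr(M), every morphism X → ΣY factors through an object of add(ΣM); that is, Hom_T(X, ΣY) = [ΣM](X, ΣY). -/
open CategoryTheory CategoryTheory.Limits CategoryTheory.Pretriangulated

universe v u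

variable {C : Type u} [Category.{v} C] [Preadditive C] [HasZeroObject C]
  [HasShift C ℤ] [∀ n : ℤ, (shiftFunctor C n).Additive] [Pretriangulated C]
  [HasFiniteBiproducts C]

/-- `X` is finitely presented by `M`: there is a triangle `M⁻¹ → M⁰ → X → ΣM⁻¹`
with `M⁻¹, M⁰ ∈ add M`. -/
def Pr (M X : C) : Prop :=
  ∃ (Mm1 M0 : C), InAdd M Mm1 ∧ InAdd M M0 ∧
    ∃ (a : Mm1 ⟶ M0) (b : M0 ⟶ X) (c : X ⟶ Mm1⟦(1 : ℤ)⟧),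
      Triangle.mk a b c ∈ distTriang C

/-!
Restricted to `M⁰`, a morphism `f : X ⟶ ΣY` lands in the exact sequence
`ΣN⁰ ⟶ ΣY ⟶ Σ²N⁻¹` coming from the presentation of `Y`; the two rigidity conditions kill
both maps out of `M⁰`, so `f` vanishes on `M⁰` and factors through `X ⟶ ΣM⁻¹`.
-/

namespace InAdd

variable {𝒜 : Type*} [Category 𝒜] [Preadditive 𝒜] [HasFiniteBiproducts 𝒜] {M : 𝒜}

lemma eq_zero_of_forall_eq_zero {A Z : 𝒜} (hA : InAdd M A) (h : ∀ g : M ⟶ Z, g = 0)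
    (g : A ⟶ Z) : g = 0 := by
  obtain ⟨n, i, p, hip⟩ := hA
  have hp : p ≫ g = 0 := biproduct.hom_ext' _ _ fun j => by
    simpa using h (biproduct.ι (fun _ => M) j ≫ p ≫ g)
  rw [← Category.id_comp g, ← hip, Category.assoc, hp, comp_zero]

lemma eq_zero_of_forall_eq_zero_map {ℬ : Type*} [Category ℬ] [Preadditive ℬ] (F : 𝒜 ⥤ ℬ)
    [F.Additive] {B : 𝒜} {Z : ℬ} (hB : InAdd M B) (h : ∀ g : Z ⟶ F.obj M, g = 0)
    (g : Z ⟶ F.obj B) : g = 0 := by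
  obtain ⟨n, i, p, hip⟩ := hB
  have hi : g ≫ F.map i = 0 := by
    rw [← Category.comp_id (g ≫ F.map i), ← F.map_id, ← biproduct.total, F.map_sum,
      Preadditive.comp_sum]
    refine Finset.sum_eq_zero fun j _ => ?_
    rw [F.map_comp, ← Category.assoc, h (_ ≫ _), zero_comp]
  rw [← Category.comp_id g, ← F.map_id, ← hip, F.map_comp, ← Category.assoc, hi, zero_comp]

lemma hom_eq_zero (F : 𝒜 ⥤ 𝒜) [F.Additive]
    (h : ∀ g : M ⟶ F.obj M, g = 0) {A B : 𝒜} (hA : InAdd M A) (hB : InAdd M B)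
    (g : A ⟶ F.obj B) : g = 0 :=
  hA.eq_zero_of_forall_eq_zero (hB.eq_zero_of_forall_eq_zero_map F h) g

end InAdd

lemma Pr.hom_shift_eq_zero_of_inAdd {M Y A : C}
    (hrigid1 : ∀ f : M ⟶ M⟦(1 : ℤ)⟧, f = 0) (hrigid2 : ∀ f : M ⟶ M⟦(2 : ℤ)⟧, f = 0)
    (hY : Pr M Y) (hA : InAdd M A) (g : A ⟶ Y⟦(1 : ℤ)⟧) : g = 0 := by
  obtain ⟨N₁, N₀, hN₁, hN₀, a, b, c, hT⟩ := hY
  have hrigid2' : ∀ f : M ⟶ (M⟦(1 : ℤ)⟧)⟦(1 : ℤ)⟧, f = 0 := fun f => by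
    let e : M⟦(2 : ℤ)⟧ ≅ (M⟦(1 : ℤ)⟧)⟦(1 : ℤ)⟧ := (shiftFunctorAdd' C (1 : ℤ) 1 2 rfl).app M
    rw [← Category.comp_id f, ← e.inv_hom_id, ← Category.assoc, hrigid2 (f ≫ e.inv), zero_comp]
  have hgc : g ≫ c⟦(1 : ℤ)⟧' = 0 :=
    InAdd.hom_eq_zero (shiftFunctor C (1 : ℤ) ⋙ shiftFunctor C (1 : ℤ)) hrigid2' hA hN₁ _
  obtain ⟨u, rfl⟩ :=
    Triangle.coyoneda_exact₁ _ (rot_of_distTriang _ (rot_of_distTriang _ hT)) g hgc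
  obtain rfl : u = 0 := InAdd.hom_eq_zero (shiftFunctor C (1 : ℤ)) hrigid1 hA hN₀ u
  exact zero_comp

/-- If `M` is 2-rigid, then for any `X, Y ∈ pr(M)` every morphism
`X ⟶ ΣY` factors through an object of `add (ΣM)`. -/
theorem stmt2 (M : C)
    (hrigid1 : ∀ f : M ⟶ M⟦(1 : ℤ)⟧, f = 0)
    (hrigid2 : ∀ f : M ⟶ M⟦(2 : ℤ)⟧, f = 0)
    (X Y : C) (hX : Pr M X) (hY : Pr M Y) (f : X ⟶ Y⟦(1 : ℤ)⟧) :
    FactorsThroughAddShift M f := by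
  obtain ⟨M₁, M₀, hM₁, hM₀, a, b, c, hT⟩ := hX
  obtain ⟨v, hv⟩ := Triangle.yoneda_exact₃ _ hT f
    (hY.hom_shift_eq_zero_of_inAdd hrigid1 hrigid2 hM₀ _)
  exact ⟨M₁, hM₁, c, v, hv⟩
end

section
/- Let A be an additive category and I an ideal with I² = 0, and let F : A → A/I be the quotient functor. Then F detects isomorphisms: a morphism f in A is an isomorphism if and only if F(f) is an isomorphism in A/I. -/
/-! Since `I² = 0`, if `f ≫ g - 𝟙` and `g ≫ f - 𝟙` lie in `I` they are square-zero, so `f ≫ g`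
and `g ≫ f` are units of the endomorphism rings (one plus a nilpotent). Hence `f` has a left and
a right inverse. -/

open CategoryTheory

universe v u

variable {A : Type u} [Category.{v} A] [Preadditive A]

/-- A (two-sided additive) ideal of an additive category. -/
structure CatIdeal (A : Type u) [Category.{v} A] [Preadditive A] where
  carrier : ∀ ⦃X Y : A⦄, (X ⟶ Y) → Prop
  zero_mem : ∀ X Y : A, carrier (0 : X ⟶ Y)
  add_mem : ∀ ⦃X Y : A⦄ ⦃f g : X ⟶ Y⦄, carrier f → carrier g → carrier (f + g)
  neg_mem : ∀ ⦃X Y : A⦄ ⦃f : X ⟶ Y⦄, carrier f → carrier (-f)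
  comp_mem_left : ∀ ⦃X Y Z : A⦄ (f : X ⟶ Y) ⦃g : Y ⟶ Z⦄, carrier g → carrier (f ≫ g)
  comp_mem_right : ∀ ⦃X Y Z : A⦄ ⦃f : X ⟶ Y⦄ (g : Y ⟶ Z), carrier f → carrier (f ≫ g)

/-- `I² = 0`: the composite of any two morphisms lying in `I` vanishes. -/
def CatIdeal.SquareZero (I : CatIdeal A) : Prop :=
  ∀ ⦃X Y Z : A⦄ ⦃f : X ⟶ Y⦄ ⦃g : Y ⟶ Z⦄, I.carrier f → I.carrier g → f ≫ g = 0

theorem isIso_of_isNilpotent_sub_one {C : Type*} [Category C] [Preadditive C] {X : C}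
    {h : End X} (hh : IsNilpotent (h - 1)) : IsIso h :=
  (isUnit_iff_isIso h).1 (by simpa using hh.isUnit_add_one)

theorem isIso_of_isIso_comp_of_isIso_comp {C : Type*} [Category C] {X Y : C} (f : X ⟶ Y)
    (g : Y ⟶ X) [IsIso (f ≫ g)] [IsIso (g ≫ f)] : IsIso f :=
  have : Mono f := mono_of_mono f g
  have : IsSplitEpi f := IsSplitEpi.mk' ⟨inv (g ≫ f) ≫ g, by simp⟩
  isIso_of_mono_of_isSplitEpi f

theorem CatIdeal.SquareZero.isIso_of_sub_id_mem {I : CatIdeal A} (hI : I.SquareZero) {X : A}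
    {h : X ⟶ X} (hh : I.carrier (h - 𝟙 X)) : IsIso h :=
  isIso_of_isNilpotent_sub_one (h := h) ⟨2, (pow_two _).trans (hI hh hh)⟩

/-- If `I² = 0`, the quotient functor `A → A/I` detects isomorphisms:
`f` is an isomorphism in `A` iff its image in `A/I` is an isomorphism, i.e. iff there is
`g` with `f ≫ g - 𝟙 ∈ I` and `g ≫ f - 𝟙 ∈ I`. -/
theorem stmt5 (I : CatIdeal A) (hI : I.SquareZero) {X Y : A} (f : X ⟶ Y) :
    IsIso f ↔ ∃ g : Y ⟶ X, I.carrier (f ≫ g - 𝟙 X) ∧ I.carrier (g ≫ f - 𝟙 Y) := by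
  constructor
  · intro _
    exact ⟨inv f, by simpa using I.zero_mem X X, by simpa using I.zero_mem Y Y⟩
  · rintro ⟨g, hfg, hgf⟩
    have := hI.isIso_of_sub_id_mem hfg
    have := hI.isIso_of_sub_id_mem hgf
    exact isIso_of_isIso_comp_of_isIso_comp f g
end

section
/- Let T be a Krull–Schmidt triangulated category, and let X ∈ T be indecomposable with (rad T)(−, X) ≠ 0. For a sequence Z →g Y →f X the following are equivalent: (i) f is a sink morphism (right minimal and right almost split) of X, and g is a right minimal weak kernel of f; (ii) there exists e : X → ΣZ such that Z →g Y →f X →e ΣZ is an almost split triangle. -/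
/-!
Since `X` is indecomposable in a Krull–Schmidt category, `End X` is a local ring. The nonzero
radical map into `X` is not a split epimorphism, so it factors through any right almost split
`f`, which is therefore nonzero. In a distinguished triangle `Z →g Y →f X → ΣZ` the map `g` is a
weak kernel of `f`, and it is right minimal: an endomorphism `u` of `Z` with `u ≫ g = g` extends
to a morphism of triangles `(u, 𝟙, c)`, and `f ≫ c = f` with `f ≠ 0` forces `c` to be a unit of
the local ring `End X`, so `u` is invertible by the five lemma. Finally, right minimal weak
kernels of `f` are unique up to isomorphism, so the first map of the triangle completing `f` can
be replaced by any of them.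
-/

open CategoryTheory CategoryTheory.Limits CategoryTheory.Pretriangulated

universe v u

variable {C : Type u} [Category.{v} C] [Preadditive C] [HasZeroObject C]
  [HasShift C ℤ] [∀ n : ℤ, (shiftFunctor C n).Additive] [Pretriangulated C]
  [HasFiniteBiproducts C]

def IsKrullSchmidtCat (C : Type u) [Category.{v} C] [Preadditive C]
    [HasFiniteBiproducts C] : Prop :=
  ∀ X : C, ∃ (n : ℕ) (Y : Fin n → C),
    (∀ i, IsLocalRing (End (Y i))) ∧ Nonempty (X ≅ ⨁ Y)

def RightMinimal {Y X : C} (f : Y ⟶ X) : Prop :=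
  ∀ g : Y ⟶ Y, g ≫ f = f → IsIso g

def RightAlmostSplit {Y X : C} (f : Y ⟶ X) : Prop :=
  (¬ ∃ s : X ⟶ Y, s ≫ f = 𝟙 X) ∧
  ∀ ⦃Z : C⦄ (h : Z ⟶ X), (¬ ∃ s : X ⟶ Z, s ≫ h = 𝟙 X) → ∃ t : Z ⟶ Y, t ≫ f = h

def SinkMorphism {Y X : C} (f : Y ⟶ X) : Prop :=
  RightMinimal f ∧ RightAlmostSplit f

def IsWeakKernel {Z Y X : C} (g : Z ⟶ Y) (f : Y ⟶ X) : Prop :=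
  g ≫ f = 0 ∧ ∀ ⦃W : C⦄ (h : W ⟶ Y), h ≫ f = 0 → ∃ t : W ⟶ Z, t ≫ g = h

def InRadical {X Y : C} (f : X ⟶ Y) : Prop :=
  ∀ g : Y ⟶ X, IsIso (𝟙 X - f ≫ g)

def Indecomp (X : C) : Prop :=
  ¬ IsZero X ∧ ∀ e : X ⟶ X, e ≫ e = e → e = 0 ∨ e = 𝟙 X

section Preadditive

variable {D : Type*} [Category D] [Preadditive D]

lemma isLocalRing_end_of_iso {X Y : D} (ψ : X ≅ Y) [IsLocalRing (End Y)] :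
    IsLocalRing (End X) :=
  let e : End X ≃+* End Y :=
    { ψ.conj with
      map_add' := fun a b => by
        simp only [MulEquiv.toEquiv_eq_coe, Equiv.toFun_as_coe, MulEquiv.coe_toEquiv,
          Iso.conj_apply]
        rw [Preadditive.add_comp, Preadditive.comp_add] }
  RingHom.domain_isLocalRing (e : End X →+* End Y)

lemma not_isZero_of_isLocalRing_end {Y : D} [IsLocalRing (End Y)] : ¬ IsZero Y :=
  fun h => one_ne_zero (α := End Y) (h.eq_of_src _ _)

lemma isZero_biproduct_of_isEmpty {ι : Type*} [IsEmpty ι] (Ys : ι → D) [HasBiproduct Ys] :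
    IsZero (⨁ Ys) :=
  (IsZero.iff_id_eq_zero _).2 (biproduct.hom_ext _ _ isEmptyElim)

lemma Indecomp.subsingleton_of_iso_biproduct {ι : Type*} {X : D} (hX : Indecomp X)
    (Ys : ι → D) [HasBiproduct Ys] (φ : X ≅ ⨁ Ys) (hYs : ∀ i, ¬ IsZero (Ys i)) :
    Subsingleton ι := by
  classical
  -- The projection onto `Ys i` is an idempotent of `X`: if it is `0` then `Ys i` is zero,
  -- if it is `𝟙` then every other summand `Ys j` is zero.
  refine ⟨fun i j => by_contra fun hij => ?_⟩
  rcases hX.2 (φ.hom ≫ biproduct.π Ys i ≫ biproduct.ι Ys i ≫ φ.inv) (by simp) with h | h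
  · apply hYs i
    rw [IsZero.iff_id_eq_zero]
    simpa using congrArg (fun e => biproduct.ι Ys i ≫ φ.inv ≫ e ≫ φ.hom ≫ biproduct.π Ys i) h
  · apply hYs j
    rw [IsZero.iff_id_eq_zero]
    simpa [biproduct.ι_π_ne_assoc _ (Ne.symm hij)] using
      (congrArg (fun e => biproduct.ι Ys j ≫ φ.inv ≫ e ≫ φ.hom ≫ biproduct.π Ys j) h).symm

lemma IsKrullSchmidtCat.isLocalRing_end [HasFiniteBiproducts D] (hKS : IsKrullSchmidtCat D)
    {X : D} (hX : Indecomp X) : IsLocalRing (End X) := by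
  obtain ⟨n, Ys, hloc, ⟨φ⟩⟩ := hKS X
  have hYs : ∀ i, ¬ IsZero (Ys i) := fun i =>
    have := hloc i
    not_isZero_of_isLocalRing_end
  have hsub := hX.subsingleton_of_iso_biproduct Ys φ hYs
  match n, Ys, hloc, φ, hsub with
  | 0, Ys, _, φ, _ => exact absurd ((isZero_biproduct_of_isEmpty Ys).of_iso φ) hX.1
  | 1, Ys, hloc, φ, _ =>
    have := hloc 0
    exact isLocalRing_end_of_iso (φ ≪≫ biproductUniqueIso Ys)
  | m + 2, _, _, _, _ => exact absurd (Subsingleton.elim (0 : Fin (m + 2)) 1) Fin.zero_ne_one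

lemma InRadical.not_splitEpi {W X : D} (hX : ¬ IsZero X) {w : W ⟶ X} (hw : InRadical w) :
    ¬ ∃ s : X ⟶ W, s ≫ w = 𝟙 X := by
  rintro ⟨s, hs⟩
  have := hw s
  have hw0 : w = 0 := by
    rw [← cancel_epi (𝟙 W - w ≫ s), Preadditive.sub_comp, Category.assoc, hs]
    simp
  exact hX ((IsZero.iff_id_eq_zero X).2 (by rw [← hs, hw0, Limits.comp_zero]))

lemma RightAlmostSplit.ne_zero {Y X : D} (hX : ¬ IsZero X)
    (hrad : ∃ (W : D) (w : W ⟶ X), InRadical w ∧ w ≠ 0) {f : Y ⟶ X}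
    (hf : RightAlmostSplit f) : f ≠ 0 := by
  obtain ⟨W, w, hw, hw0⟩ := hrad
  obtain ⟨t, ht⟩ := hf.2 w (hw.not_splitEpi hX)
  rintro rfl
  exact hw0 (by rw [← ht, Limits.comp_zero])

lemma isIso_of_comp_eq_self {Y X : D} [IsLocalRing (End X)] {f : Y ⟶ X} (hf : f ≠ 0)
    {c : X ⟶ X} (hc : f ≫ c = f) : IsIso c := by
  rcases IsLocalRing.isUnit_or_isUnit_of_add_one (add_sub_cancel (show End X from c) 1)
    with h | h
  · exact (isUnit_iff_isIso c).1 h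
  · have : IsIso (𝟙 X - c) := (isUnit_iff_isIso (1 - show End X from c)).1 h
    refine absurd ?_ hf
    rw [← cancel_mono (𝟙 X - c), Preadditive.comp_sub, hc]
    simp

lemma IsWeakKernel.exists_iso_of_rightMinimal {Z Z' Y X : D} {g : Z ⟶ Y} {g' : Z' ⟶ Y}
    {f : Y ⟶ X} (hg : IsWeakKernel g f) (hg' : IsWeakKernel g' f) (hmin : RightMinimal g)
    (hmin' : RightMinimal g') : ∃ u : Z' ≅ Z, u.hom ≫ g = g' := by
  obtain ⟨u, hu⟩ := hg.2 g' hg'.1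
  obtain ⟨v, hv⟩ := hg'.2 g hg.1
  have := hmin (v ≫ u) (by rw [Category.assoc, hu, hv])
  have := hmin' (u ≫ v) (by rw [Category.assoc, hv, hu])
  have : Mono u := mono_of_mono u v
  have : IsSplitEpi u := ⟨⟨inv (v ≫ u) ≫ v, by simp⟩⟩
  have := isIso_of_mono_of_isSplitEpi u
  exact ⟨asIso u, hu⟩

end Preadditive

section Pretriangulated

variable {D : Type*} [Category D] [Preadditive D] [HasZeroObject D] [HasShift D ℤ]
  [∀ n : ℤ, (shiftFunctor D n).Additive] [Pretriangulated D] {X Y Z : D}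
  {g : Z ⟶ Y} {f : Y ⟶ X} {e : X ⟶ Z⟦(1 : ℤ)⟧}

lemma isWeakKernel_of_distTriang (hT : Triangle.mk g f e ∈ distTriang D) : IsWeakKernel g f :=
  ⟨comp_distTriang_mor_zero₁₂ _ hT, fun _ h hh =>
    let ⟨t, ht⟩ := Triangle.coyoneda_exact₂ _ hT h hh
    ⟨t, ht.symm⟩⟩

lemma rightMinimal_of_distTriang (hT : Triangle.mk g f e ∈ distTriang D)
    [IsLocalRing (End X)] (hf : f ≠ 0) : RightMinimal g := by
  intro u hu
  have hu' : g ≫ 𝟙 Y = u ≫ g := by rw [Category.comp_id, hu]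
  obtain ⟨c, hc₂, hc₃⟩ := complete_distinguished_triangle_morphism _ _ hT hT u (𝟙 Y) hu'
  have : IsIso c := isIso_of_comp_eq_self hf (hc₂.trans (Category.id_comp f))
  exact isIso₁_of_isIso₂₃
    (Triangle.homMk (Triangle.mk g f e) (Triangle.mk g f e) u (𝟙 Y) c hu' hc₂ hc₃) hT hT
    (inferInstanceAs (IsIso (𝟙 Y))) ‹IsIso c›

lemma distTriang_of_iso_obj₁ {Z' : D} {g' : Z' ⟶ Y} {e' : X ⟶ Z'⟦(1 : ℤ)⟧}
    (hT : Triangle.mk g' f e' ∈ distTriang D) (u : Z' ≅ Z) (hu : u.hom ≫ g = g') :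
    Triangle.mk g f (e' ≫ u.hom⟦(1 : ℤ)⟧') ∈ distTriang D := by
  refine isomorphic_distinguished _ hT _ (Triangle.isoMk _ _ u.symm (Iso.refl _) (Iso.refl _)
    ?_ ?_ ?_) <;> dsimp [Triangle.mk]
  · simp [← hu]
  · simp
  · simp [← Functor.map_comp]

end Pretriangulated

/-- In a Krull–Schmidt triangulated category, for `X` indecomposable with
`(rad C)(−, X) ≠ 0` and a sequence `Z →g Y →f X`, the following are equivalent:
(i) `f` is a sink morphism and `g` is a right minimal weak kernel of `f`;
(ii) there is `e : X ⟶ ΣZ` such that `Z →g Y →f X →e ΣZ` is an almost split triangle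
(a distinguished triangle whose second morphism is a sink morphism). -/
theorem stmt9 (hKS : IsKrullSchmidtCat C)
    (X Y Z : C) (hX : Indecomp X)
    (hrad : ∃ (W : C) (w : W ⟶ X), InRadical w ∧ w ≠ 0)
    (g : Z ⟶ Y) (f : Y ⟶ X) :
    (SinkMorphism f ∧ RightMinimal g ∧ IsWeakKernel g f) ↔
    (∃ e : X ⟶ Z⟦(1 : ℤ)⟧, (Triangle.mk g f e ∈ distTriang C) ∧ SinkMorphism f) := by
  have := hKS.isLocalRing_end hX
  constructor
  · rintro ⟨hsink, hmin, hker⟩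
    obtain ⟨Z', g', e', hT'⟩ := distinguished_cocone_triangle₁ f
    have hf : f ≠ 0 := hsink.2.ne_zero hX.1 hrad
    obtain ⟨u, hu⟩ := hker.exists_iso_of_rightMinimal (isWeakKernel_of_distTriang hT') hmin
      (rightMinimal_of_distTriang hT' hf)
    exact ⟨_, distTriang_of_iso_obj₁ hT' u hu, hsink⟩
  · rintro ⟨e, hT, hsink⟩
    exact ⟨hsink, rightMinimal_of_distTriang hT (hsink.2.ne_zero hX.1 hrad),
      isWeakKernel_of_distTriang hT⟩
end

section
/- Let T be a triangulated category, M a rigid object, and X, Y, Z ∈ pr(M) with chosen presentation triangles. Let g ∈ [ΣM](X, ΣY) and h ∈ Hom_T(Z, X). Then under the bijection of Lemma (taking presentation of extensions), the presentation of the composite g∘h ∈ [ΣM](Z, ΣY) equals the composition P(g)∘P(h) in the homotopy category, where P(h) is a presentation of h (a homotopy class of chain maps between the 2-term complexes) and P(g) ∈ Hom(P(X), ΣP(Y)) corresponds to g. -/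
open CategoryTheory CategoryTheory.Limits CategoryTheory.Pretriangulated

universe v u

variable {C : Type u} [Category.{v} C] [Preadditive C] [HasZeroObject C]
  [HasShift C ℤ] [∀ n : ℤ, (shiftFunctor C n).Additive] [Pretriangulated C]
  [HasFiniteBiproducts C]

theorem stmt19_general (X Y Z M1X M0Y M1Z : C)
    (cX : X ⟶ M1X⟦(1 : ℤ)⟧)
    (bY : M0Y ⟶ Y)
    (cZ : Z ⟶ M1Z⟦(1 : ℤ)⟧)
    -- g ∈ [ΣM](X, ΣY), with presentation f = P(g)
    (g : X ⟶ Y⟦(1 : ℤ)⟧)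
    (f : M1X ⟶ M0Y) (hgf : g = cX ≫ f⟦(1 : ℤ)⟧' ≫ bY⟦(1 : ℤ)⟧')
    -- h : Z ⟶ X with presentation (h⁻¹, h⁰)
    (h : Z ⟶ X) (hm1 : M1Z ⟶ M1X)
    (hsq3 : h ≫ cX = cZ ≫ hm1⟦(1 : ℤ)⟧') :
    h ≫ g = cZ ≫ (hm1 ≫ f)⟦(1 : ℤ)⟧' ≫ bY⟦(1 : ℤ)⟧' := by
  rw [hgf, reassoc_of% hsq3, Functor.map_comp, Category.assoc]

/-- Let `M` be rigid, `X, Y, Z ∈ pr(M)` with chosen presentation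
triangles. Let `g ∈ [ΣM](X, ΣY)` with presentation `f = P(g)` (i.e.
`g = Σb_Y ∘ Σf ∘ c_X`) and let `h : Z ⟶ X` with presentation `(h⁻¹, h⁰)`. Then
`h⁻¹ ≫ f` is a presentation of the composite `g ∘ h`, i.e.
`P(g ∘ h) = P(g) ∘ P(h)`:  `h ≫ g = c_Z ≫ Σ(h⁻¹ ≫ f) ≫ Σb_Y`. -/
theorem stmt19 (M X Y Z M1X M0X M1Y M0Y M1Z M0Z : C)
    (hrigid : ∀ f : M ⟶ M⟦(1 : ℤ)⟧, f = 0)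
    (h1X : InAdd M M1X) (h0X : InAdd M M0X) (h1Y : InAdd M M1Y) (h0Y : InAdd M M0Y)
    (h1Z : InAdd M M1Z) (h0Z : InAdd M M0Z)
    (aX : M1X ⟶ M0X) (bX : M0X ⟶ X) (cX : X ⟶ M1X⟦(1 : ℤ)⟧)
    (aY : M1Y ⟶ M0Y) (bY : M0Y ⟶ Y) (cY : Y ⟶ M1Y⟦(1 : ℤ)⟧)
    (aZ : M1Z ⟶ M0Z) (bZ : M0Z ⟶ Z) (cZ : Z ⟶ M1Z⟦(1 : ℤ)⟧)
    (hTX : Triangle.mk aX bX cX ∈ distTriang C)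
    (hTY : Triangle.mk aY bY cY ∈ distTriang C)
    (hTZ : Triangle.mk aZ bZ cZ ∈ distTriang C)
    -- g ∈ [ΣM](X, ΣY), with presentation f = P(g)
    (g : X ⟶ Y⟦(1 : ℤ)⟧) (hg : FactorsThroughAddShift M g)
    (f : M1X ⟶ M0Y) (hgf : g = cX ≫ f⟦(1 : ℤ)⟧' ≫ bY⟦(1 : ℤ)⟧')
    -- h : Z ⟶ X with presentation (h⁻¹, h⁰)
    (h : Z ⟶ X) (hm1 : M1Z ⟶ M1X) (h0 : M0Z ⟶ M0X)
    (hsq1 : hm1 ≫ aX = aZ ≫ h0)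
    (hsq2 : h0 ≫ bX = bZ ≫ h)
    (hsq3 : h ≫ cX = cZ ≫ hm1⟦(1 : ℤ)⟧') :
    h ≫ g = cZ ≫ (hm1 ≫ f)⟦(1 : ℤ)⟧' ≫ bY⟦(1 : ℤ)⟧' :=
  stmt19_general X Y Z M1X M0Y M1Z cX bY cZ g f hgf h hm1 hsq3
end
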